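/- arXiv:2304.12029 — 5 statements merged into one kernel-verified Lean document; each statement's English description precedes it below -/
import Mathlib

section
/- Let γ_Z = Σ_{l=1}^n b_l δ_{z_l} be a discrete probability measure on ℝ^d with distinct points z_l and positive weights b_l, and let P_1,…,P_p be surjective linear maps P_i : ℝ^d → ℝ^{d_i}. If γ is a probability measure on ℝ^d with P_i#γ = P_i#γ_Z for all i, then γ(S) = 1 where S = ∩_{i=1}^p (Z + Ker P_i) and Z = {z_1,…,z_n}. -/
open MeasureTheory

/-- Support of solutions of the reconstruction problem: if `γ` has the same push-forwards
as `γ_Z = Σ b_l δ_{z_l}` under all surjective linear maps `P_i`, then `γ` gives full mass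
to `S = ∩_i (Z + Ker P_i)`. -/
theorem support_of_solutions
    (d n p : ℕ) (di : Fin p → ℕ)
    (z : Fin n → (Fin d → ℝ)) (hz : Function.Injective z)
    (b : Fin n → ℝ) (hb : ∀ l, 0 < b l) (hsum : ∑ l, b l = 1)
    (P : ∀ i : Fin p, (Fin d → ℝ) →ₗ[ℝ] (Fin (di i) → ℝ))
    (hP : ∀ i, Function.Surjective (P i))
    (γ : Measure (Fin d → ℝ)) [IsProbabilityMeasure γ]
    (γZ : Measure (Fin d → ℝ))
    (hγZ : γZ = ∑ l, ENNReal.ofReal (b l) • Measure.dirac (z l))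
    (hsol : ∀ i, γ.map (P i) = γZ.map (P i)) :
    γ (⋂ i, ⋃ l, {x : Fin d → ℝ | ∃ k ∈ LinearMap.ker (P i), x = z l + k}) = 1 := by
  classical
  have hPm : ∀ i, Measurable (P i) :=
    fun i => (P i).continuous_of_finiteDimensional.measurable
  set T : ∀ i : Fin p, Set (Fin (di i) → ℝ) := fun i => ⋃ l, {P i (z l)} with hT
  have hTm : ∀ i, MeasurableSet (T i) :=
    fun i => MeasurableSet.iUnion fun l => measurableSet_singleton _
  have hset : ∀ i, (⋃ l, {x : Fin d → ℝ | ∃ k ∈ LinearMap.ker (P i), x = z l + k})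
      = P i ⁻¹' T i := by
    intro i
    ext x
    simp only [Set.mem_iUnion, Set.mem_preimage, hT, Set.mem_singleton_iff, Set.mem_setOf_eq]
    constructor
    · rintro ⟨l, k, hk, rfl⟩
      exact ⟨l, by simp [map_add, LinearMap.mem_ker.mp hk]⟩
    · rintro ⟨l, hl⟩
      refine ⟨l, x - z l, ?_, by abel⟩
      simp [LinearMap.mem_ker, map_sub, hl]
  have hfull : ∀ i, γ (P i ⁻¹' T i) = 1 := by
    intro i
    have h1 : γ (P i ⁻¹' T i) = γ.map (P i) (T i) :=
      (Measure.map_apply (hPm i) (hTm i)).symm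
    rw [h1, hsol i, Measure.map_apply (hPm i) (hTm i), hγZ]
    have hpre : MeasurableSet (P i ⁻¹' T i) := (hTm i).preimage (hPm i)
    have hdirac : ∀ l : Fin n, Measure.dirac (z l) (P i ⁻¹' T i) = 1 := by
      intro l
      rw [Measure.dirac_apply' _ hpre]
      have : z l ∈ P i ⁻¹' T i := by
        simp only [Set.mem_preimage, hT, Set.mem_iUnion, Set.mem_singleton_iff]
        exact ⟨l, rfl⟩
      simp [Set.indicator_of_mem this]
    simp only [Measure.coe_finset_sum, Finset.sum_apply, Measure.smul_apply, smul_eq_mul,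
      hdirac, mul_one]
    rw [← ENNReal.ofReal_sum_of_nonneg (fun l _ => (hb l).le), hsum, ENNReal.ofReal_one]
  simp_rw [hset]
  have hImeas : MeasurableSet (⋂ i, P i ⁻¹' T i) :=
    MeasurableSet.iInter fun i => (hTm i).preimage (hPm i)
  rw [← prob_compl_eq_zero_iff hImeas]
  rw [Set.compl_iInter]
  refine measure_iUnion_null fun i => ?_
  rw [prob_compl_eq_zero_iff ((hTm i).preimage (hPm i))]
  exact hfull i
end

section
/- Let ℙ be a probability distribution on ℝ^d with ℙ(H) = 0 for every hyperplane H, let v_1,…,v_D be i.i.d. with law ℙ where D > d, and let w_1,…,w_D ∈ ℝ^d be fixed vectors, each equal to one of the fixed distinct points z_1,…,z_n. Then almost surely, every solution x ∈ ℝ^d of the system v_kᵀ x = v_kᵀ w_k for all k ∈ {1,…,D} satisfies x ∈ {z_1,…,z_n}. -/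
/-!
Fix an index `κ` and `d` other indices. At most `d` vectors drawn independently from `ℙ` are
almost surely linearly independent, since each one avoids the proper subspace spanned by the
previous ones. So the `d` chosen equations almost surely pin down a unique candidate solution `x`,
which does not depend on `v_κ`. If `x ≠ w_κ`, the remaining equation `v_κ ⬝ (x - w_κ) = 0` puts
`v_κ` into a hyperplane chosen independently of it, an event of probability zero. Hence almost
surely every solution equals `w_κ`, which is one of the `z_l`.
-/

open MeasureTheory Matrix

theorem measure_submodule_eq_zero_of_ne_top {E : Type*} [AddCommGroup E] [Module ℝ E]
    [FiniteDimensional ℝ E] [MeasurableSpace E] {μ : Measure E}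
    (hμ : ∀ H : Submodule ℝ E, Module.finrank ℝ H = Module.finrank ℝ E - 1 → μ H = 0)
    {W : Submodule ℝ E} (hW : W ≠ ⊤) : μ W = 0 := by
  obtain ⟨f, hf0, hWf⟩ := W.exists_le_ker_of_lt_top hW.lt_top
  refine measure_mono_null hWf (hμ _ ?_)
  rw [← Module.Dual.finrank_ker_add_one_of_ne_zero hf0, Nat.add_sub_cancel]

theorem measure_pi_eq_zero_of_forall_update {ι : Type*} [Fintype ι] [DecidableEq ι]
    {X : ι → Type*} [∀ i, MeasurableSpace (X i)] (μ : ∀ i, Measure (X i))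
    [∀ i, SigmaFinite (μ i)] (i : ι) {S : Set (∀ i, X i)} (hS : MeasurableSet S)
    (h : ∀ x, μ i {u | Function.update x i u ∈ S} = 0) :
    Measure.pi μ S = 0 := by
  obtain rfl | ⟨x, -⟩ := S.eq_empty_or_nonempty
  · exact measure_empty
  have hslice : (fun y => ∫⁻ u, S.indicator 1 (Function.update y i u) ∂μ i) = 0 := by
    funext y
    rw [Pi.zero_apply, ← h y]
    exact lintegral_indicator_one (s := Function.update y i ⁻¹' S) (measurable_update y hS)
  calc Measure.pi μ S = ∫⁻ y, S.indicator 1 y ∂Measure.pi μ := (lintegral_indicator_one hS).symm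
    _ = (∫⋯∫⁻_(Finset.univ.erase i),
          fun y => ∫⁻ u, S.indicator 1 (Function.update y i u) ∂μ i ∂μ) x := by
      rw [lintegral_eq_lmarginal_univ x,
        lmarginal_erase' _ (measurable_one.indicator hS) (Finset.mem_univ i)]
    _ = 0 := by rw [hslice]; simp [lmarginal]

theorem ae_linearIndependent_comp {ι E : Type*} [Fintype ι] [DecidableEq ι]
    [NormedAddCommGroup E] [NormedSpace ℝ E] [FiniteDimensional ℝ E]
    [MeasurableSpace E] [BorelSpace E] {μ : Measure E} [SigmaFinite μ]
    (hμ : ∀ W : Submodule ℝ E, W ≠ ⊤ → μ W = 0) :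
    ∀ {k : ℕ}, k ≤ Module.finrank ℝ E → ∀ e : Fin k ↪ ι,
      ∀ᵐ v ∂Measure.pi (fun _ : ι => μ), LinearIndependent ℝ (v ∘ e)
  | 0, _, _ => .of_forall fun _ => linearIndependent_empty_type
  | k + 1, hk, e => by
    let e' : Fin k ↪ ι := Fin.castSuccEmb.trans e
    have hmeas : ∀ {m} (f : Fin m ↪ ι),
        MeasurableSet {v : ι → E | LinearIndependent ℝ (v ∘ f)} := fun f =>
      (isOpen_setOfPred_linearIndependent.preimage (by fun_prop)).measurableSet
    have hsnoc : ∀ v : ι → E, v ∘ e = Fin.snoc (v ∘ e') (v (e (Fin.last k))) := fun v => by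
      rw [← Fin.snoc_init_self (v ∘ e)]
      rfl
    have hupd : ∀ (v : ι → E) u, Function.update v (e (Fin.last k)) u ∘ e' = v ∘ e' :=
      fun v u => funext fun j =>
        Function.update_of_ne (e.injective.ne (Fin.castSucc_lt_last j).ne) _ _
    have hnew : Measure.pi (fun _ : ι => μ)
        {v | LinearIndependent ℝ (v ∘ e') ∧ ¬ LinearIndependent ℝ (v ∘ e)} = 0 := by
      refine measure_pi_eq_zero_of_forall_update _ (e (Fin.last k))
        ((hmeas e').inter (hmeas e).compl) fun v => ?_
      simp only [Set.mem_ofPred_eq, hsnoc, hupd, Function.update_self, linearIndependent_finSnoc,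
        not_and, not_not]
      have hspan : Submodule.span ℝ (Set.range (v ∘ e')) ≠ ⊤ := fun htop => by
        have := finrank_range_le_card (R := ℝ) (v ∘ e')
        rw [Set.finrank, htop, finrank_top, Fintype.card_fin] at this
        omega
      exact measure_mono_null (fun u hu => hu.2 hu.1) (hμ _ hspan)
    filter_upwards [ae_linearIndependent_comp hμ (by omega) e',
      measure_eq_zero_iff_ae_notMem.mp hnew] with v hv' hv
    exact not_not.mp fun h => hv ⟨hv', h⟩

theorem Continuous.measurable_inv_mulVec {X n : Type*} [Fintype n] [DecidableEq n]
    [TopologicalSpace X] [MeasurableSpace X] [OpensMeasurableSpace X]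
    {A : X → Matrix n n ℝ} {b : X → n → ℝ} (hA : Continuous A) (hb : Continuous b) :
    Measurable fun x => (A x)⁻¹ *ᵥ b x := by
  simp only [Matrix.inv_def, Ring.inverse_eq_inv', Matrix.smul_mulVec]
  exact hA.matrix_det.measurable.inv.smul (hA.matrix_adjugate.matrix_mulVec hb).measurable

theorem measure_pi_ne_zero_dotProduct_eq_zero {ι : Type*} [Fintype ι] [DecidableEq ι] {d : ℕ}
    {μ : Measure (Fin d → ℝ)} [SigmaFinite μ]
    (hμ : ∀ W : Submodule ℝ (Fin d → ℝ), W ≠ ⊤ → μ W = 0) (i : ι)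
    {g : (ι → Fin d → ℝ) → Fin d → ℝ} (hg : Measurable g)
    (hgi : ∀ v u, g (Function.update v i u) = g v) :
    Measure.pi (fun _ => μ) {v | g v ≠ 0 ∧ v i ⬝ᵥ g v = 0} = 0 := by
  have hmeas : MeasurableSet {v : ι → Fin d → ℝ | g v ≠ 0 ∧ v i ⬝ᵥ g v = 0} :=
    (hg (measurableSet_singleton 0)).compl.inter <|
      ((continuous_fst.dotProduct continuous_snd).measurable.comp
        ((measurable_pi_apply i).prodMk hg)) (measurableSet_singleton 0)
  refine measure_pi_eq_zero_of_forall_update _ i hmeas fun v => ?_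
  simp only [Set.mem_ofPred_eq, hgi, Function.update_self]
  by_cases hv : g v = 0
  · simp [hv]
  refine measure_mono_null (fun u hu => ?_) (hμ (LinearMap.ker (dotProductEquiv ℝ (Fin d) (g v)))
    (LinearMap.ker_eq_top.not.mpr ((dotProductEquiv ℝ (Fin d)).map_ne_zero_iff.mpr hv)))
  simpa [dotProduct_comm] using hu.2

theorem ae_eq_of_forall_dotProduct_eq {ι : Type*} [Fintype ι] [DecidableEq ι] {d : ℕ}
    (hd : d < Fintype.card ι) {μ : Measure (Fin d → ℝ)} [SigmaFinite μ]
    (hμ : ∀ W : Submodule ℝ (Fin d → ℝ), W ≠ ⊤ → μ W = 0) (w : ι → Fin d → ℝ) (κ : ι) :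
    ∀ᵐ v ∂Measure.pi (fun _ => μ), ∀ x, (∀ k, v k ⬝ᵥ x = v k ⬝ᵥ w k) → x = w κ := by
  obtain ⟨e⟩ : Nonempty (Fin d ↪ {j // j ≠ κ}) :=
    Function.Embedding.nonempty_of_card_le (by simp [Fintype.card_subtype_compl]; omega)
  set f : Fin d ↪ ι := e.trans (Function.Embedding.subtype _)
  set sol := fun v : ι → Fin d → ℝ => (Matrix.of (v ∘ f))⁻¹ *ᵥ fun j => v (f j) ⬝ᵥ w (f j)
  have hsol : ∀ v x, LinearIndependent ℝ (v ∘ f) → (∀ k, v k ⬝ᵥ x = v k ⬝ᵥ w k) → sol v = x := by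
    intro v x hli hx
    have hunit := (Matrix.linearIndependent_rows_iff_isUnit (A := Matrix.of (v ∘ f))).mp hli
    have hAx : Matrix.of (v ∘ f) *ᵥ x = fun j => v (f j) ⬝ᵥ w (f j) := funext fun j => hx (f j)
    simp only [sol]
    rw [← hAx, mulVec_mulVec, nonsing_inv_mul _ ((isUnit_iff_isUnit_det _).mp hunit), one_mulVec]
  have hsol_update : ∀ v u, sol (Function.update v κ u) = sol v := by
    intro v u
    have : ∀ j, Function.update v κ u (f j) = v (f j) := fun j => Function.update_of_ne (e j).2 _ _
    simp only [sol, Function.comp_def, this]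
  have hsol_meas : Measurable sol := by
    refine Continuous.measurable_inv_mulVec ?_ ?_ <;> fun_prop
  filter_upwards [ae_linearIndependent_comp hμ (by simp) f,
    measure_eq_zero_iff_ae_notMem.mp (measure_pi_ne_zero_dotProduct_eq_zero hμ κ
      (hsol_meas.sub_const (w κ)) fun v u => by rw [hsol_update])] with v hli hv x hx
  have hx_eq := hsol v x hli hx
  by_contra hne
  exact hv ⟨sub_ne_zero.mpr (hx_eq ▸ hne), by rw [hx_eq, dotProduct_sub, hx κ, sub_self]⟩

theorem ae_overdetermined_solution_mem_general
    (d n D : ℕ) (hD : D > d)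
    (μ : Measure (Fin d → ℝ)) [IsProbabilityMeasure μ]
    (hμ : ∀ H : Submodule ℝ (Fin d → ℝ), Module.finrank ℝ H = d - 1 → μ (H : Set (Fin d → ℝ)) = 0)
    (z : Fin n → (Fin d → ℝ))
    (w : Fin D → (Fin d → ℝ)) (hw : ∀ k, ∃ l, w k = z l) :
    (Measure.pi fun _ : Fin D => μ)
      {v : Fin D → (Fin d → ℝ) |
        ∀ x : Fin d → ℝ, (∀ k, v k ⬝ᵥ x = v k ⬝ᵥ w k) → ∃ l, x = z l} = 1 := by
  have hproper : ∀ W : Submodule ℝ (Fin d → ℝ), W ≠ ⊤ → μ W = 0 := fun W hW =>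
    measure_submodule_eq_zero_of_ne_top (by simpa using hμ) hW
  obtain ⟨l, hl⟩ := hw ⟨d, hD⟩
  have hae := ae_eq_of_forall_dotProduct_eq (by simpa using hD) hproper w ⟨d, hD⟩
  refine (measure_congr (ae_eq_univ.mpr (ae_iff.mp ?_))).trans measure_univ
  exact hae.mono fun v hv x hx => ⟨l, (hv x hx).trans hl⟩

/-- If `ℙ` gives zero mass to hyperplanes, `v_1,…,v_D` are i.i.d. of law `ℙ` with `D > d`,
and each `w_k` is one of the distinct points `z_1,…,z_n`, then almost surely every solution
`x` of the overdetermined system `v_kᵀ x = v_kᵀ w_k` belongs to `{z_1,…,z_n}`. -/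
theorem ae_overdetermined_solution_mem
    (d n D : ℕ) (hD : D > d)
    (μ : Measure (Fin d → ℝ)) [IsProbabilityMeasure μ]
    (hμ : ∀ H : Submodule ℝ (Fin d → ℝ), Module.finrank ℝ H = d - 1 → μ (H : Set (Fin d → ℝ)) = 0)
    (z : Fin n → (Fin d → ℝ)) (hz : Function.Injective z)
    (w : Fin D → (Fin d → ℝ)) (hw : ∀ k, ∃ l, w k = z l) :
    (Measure.pi fun _ : Fin D => μ)
      {v : Fin D → (Fin d → ℝ) |
        ∀ x : Fin d → ℝ, (∀ k, v k ⬝ᵥ x = v k ⬝ᵥ w k) → ∃ l, x = z l} = 1 :=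
  ae_overdetermined_solution_mem_general d n D hD μ hμ z w hw
end

section
/- Let γ_Z = Σ_{l=1}^n b_l δ_{z_l} be a fixed discrete probability measure on ℝ^d with distinct points and positive weights. Let P_1,…,P_p be random matrices P_i ∈ ℝ^{d_i × d} whose rows are i.i.d. samples from a law ℙ on ℝ^d giving mass zero to every hyperplane. If Σ_{i=1}^p d_i > d, then ℙ-almost surely the only probability measure γ on ℝ^d satisfying P_i#γ = P_i#γ_Z for all i ∈ {1,…,p} is γ = γ_Z. -/
open MeasureTheory Matrix

/-!
Flatten the rows of all the `P_i` into one i.i.d. family `u : ι → ℝ^d` with `|ι| ≥ d + 1`, and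
fix `d` of them, `u ∘ c`, and one more, `u a`. Each exceptional event is null by Fubini in a
single row: once the other rows are fixed, that row has to lie in a proper subspace.

Almost surely the rows `u ∘ c` are linearly independent, so for any targets `t j` among the `z_l`
exactly one `x` satisfies `u (c j) ⬝ᵥ x = u (c j) ⬝ᵥ t j`; as this `x` does not depend on `u a`,
almost surely `u a ⬝ᵥ (x - z_l) ≠ 0` unless `x = z_l`. Hence every `x` with `P_i x ∈ P_i {z_l}`
for all `i` is one of the `z_l`, so a measure `γ` with the same projections as `γ_Z` is carried by
`{z_l}`. Almost surely every row separates the `z_l`; then a single projection is injective on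
`{z_l}` and already determines the weights of `γ`.
-/

section Hyperplanes

variable {d : ℕ} {μ : Measure (Fin d → ℝ)}
  (hμ : ∀ H : Submodule ℝ (Fin d → ℝ), Module.finrank ℝ H = d - 1 → μ (H : Set (Fin d → ℝ)) = 0)
include hμ

theorem measure_submodule_eq_zero {W : Submodule ℝ (Fin d → ℝ)} (hW : W ≠ ⊤) :
    μ (W : Set (Fin d → ℝ)) = 0 := by
  obtain ⟨f, hf, hWf⟩ := W.exists_le_ker_of_lt_top hW.lt_top
  have hker := Module.Dual.finrank_ker_add_one_of_ne_zero hf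
  rw [Module.finrank_fin_fun] at hker
  exact measure_mono_null hWf (hμ _ (by omega))

theorem measure_dotProduct_eq_zero {w : Fin d → ℝ} (hw : w ≠ 0) :
    μ {v | v ⬝ᵥ w = 0} = 0 := by
  have hker : LinearMap.ker (dotProductEquiv ℝ (Fin d) w) ≠ ⊤ := by
    rwa [Ne, LinearMap.ker_eq_top, LinearEquiv.map_eq_zero_iff]
  convert measure_submodule_eq_zero hμ hker using 2
  ext v
  simp [dotProduct_comm]

end Hyperplanes

theorem MeasureTheory.Measure.pi_eq_zero_of_forall_update_preimage {ι : Type*} [Fintype ι]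
    [DecidableEq ι] {X : ι → Type*} [∀ i, MeasurableSpace (X i)] (μ : ∀ i, Measure (X i))
    [∀ i, SigmaFinite (μ i)] {B : Set (∀ i, X i)} (hB : MeasurableSet B) (k : ι)
    (h : ∀ x, μ k (Function.update x k ⁻¹' B) = 0) : Measure.pi μ B = 0 := by
  rcases isEmpty_or_nonempty (∀ i, X i) with hX | ⟨⟨x⟩⟩
  · simp [Set.eq_empty_of_isEmpty B]
  have hslice : (fun x => ∫⁻ y, B.indicator 1 (Function.update x k y) ∂μ k) = 0 := by
    funext x
    rw [Pi.zero_apply, ← h x]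
    exact lintegral_indicator_one (measurable_update x (a := k) hB)
  rw [← lintegral_indicator_one hB, lintegral_eq_lmarginal_univ x,
    lmarginal_erase' _ (measurable_one.indicator hB) (Finset.mem_univ k), hslice]
  simp [lmarginal]

theorem MeasureTheory.Measure.pi_map_piCurry {ι : Type*} [Fintype ι] {κ : ι → Type*}
    [∀ i, Fintype (κ i)] {X : ∀ i, κ i → Type*} [∀ i j, MeasurableSpace (X i j)]
    (μ : ∀ i j, Measure (X i j)) [∀ i j, IsProbabilityMeasure (μ i j)] :
    (Measure.pi fun p : (i : ι) × κ i => μ p.1 p.2).map (MeasurableEquiv.piCurry X) =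
      Measure.pi fun i => Measure.pi fun j => μ i j := by
  simpa only [Measure.infinitePi_eq_pi] using Measure.infinitePi_map_piCurry μ

noncomputable def dotProductSolve {d : ℕ} (v t : Fin d → Fin d → ℝ) : Fin d → ℝ :=
  (Matrix.of v)⁻¹ *ᵥ fun j => v j ⬝ᵥ t j

theorem eq_dotProductSolve {d : ℕ} {v t : Fin d → Fin d → ℝ} (hv : LinearIndependent ℝ v)
    {x : Fin d → ℝ} (hx : ∀ j, v j ⬝ᵥ x = v j ⬝ᵥ t j) : x = dotProductSolve v t := by
  have hdet : IsUnit (Matrix.of v).det :=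
    (isUnit_iff_isUnit_det _).mp (linearIndependent_rows_iff_isUnit.mp hv)
  have hrhs : (fun j => v j ⬝ᵥ t j) = Matrix.of v *ᵥ x := funext fun j => (hx j).symm
  rw [dotProductSolve, hrhs, mulVec_mulVec, nonsing_inv_mul _ hdet, one_mulVec]

theorem measurable_dotProductSolve {d : ℕ} (t : Fin d → Fin d → ℝ) :
    Measurable fun v => dotProductSolve v t := by
  have hof : Continuous fun v : Fin d → Fin d → ℝ => Matrix.of v := continuous_id
  have hinv : ∀ i j, Measurable fun v : Fin d → Fin d → ℝ => (Matrix.of v)⁻¹ i j := fun i j => by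
    have hadj : (fun v : Fin d → Fin d → ℝ => (Matrix.of v)⁻¹ i j) =
        fun v => (Matrix.of v).det⁻¹ * (Matrix.of v).adjugate i j := funext fun v => by
      rw [inv_def, Matrix.smul_apply, smul_eq_mul, Ring.inverse_eq_inv']
    have hdet : Measurable fun v : Fin d → Fin d → ℝ => (Matrix.of v).det⁻¹ :=
      hof.matrix_det.measurable.inv
    rw [hadj]
    exact hdet.mul (hof.matrix_adjugate.matrix_elem i j).measurable
  refine measurable_pi_lambda _ fun i => ?_
  show Measurable fun v => ∑ j, (Matrix.of v)⁻¹ i j * (v j ⬝ᵥ t j)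
  refine Finset.measurable_sum _ fun j _ => (hinv i j).mul ?_
  simp only [dotProduct]
  fun_prop

section GenericRows

variable {ι : Type*} [Fintype ι] [DecidableEq ι] {d : ℕ} {μ : Measure (Fin d → ℝ)}
  [SigmaFinite μ]
  (hμ : ∀ H : Submodule ℝ (Fin d → ℝ), Module.finrank ℝ H = d - 1 → μ (H : Set (Fin d → ℝ)) = 0)
include hμ

theorem ae_dotProduct_ne_zero {a : ι} {F : (ι → Fin d → ℝ) → Fin d → ℝ} (hF : Measurable F)
    (hFa : ∀ u v, F (Function.update u a v) = F u) :
    ∀ᵐ u ∂Measure.pi fun _ : ι => μ, F u ≠ 0 → u a ⬝ᵥ F u ≠ 0 := by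
  have hB : MeasurableSet {u : ι → Fin d → ℝ | F u ≠ 0 ∧ u a ⬝ᵥ F u = 0} := by
    have : Measurable fun u : ι → Fin d → ℝ => u a ⬝ᵥ F u := by
      simp only [dotProduct]; fun_prop
    exact (hF (measurableSet_singleton 0)).compl.inter (this (measurableSet_singleton 0))
  refine measure_mono_null (fun u hu => ?_)
    (Measure.pi_eq_zero_of_forall_update_preimage _ hB a fun u => ?_)
  · simpa using hu
  · by_cases hu : F u = 0
    · simp [hFa, hu]
    · refine measure_mono_null (fun v hv => ?_) (measure_dotProduct_eq_zero hμ hu)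
      simpa [hFa] using hv.2

theorem ae_linearIndependent_comp_s7 {m : ℕ} {c : Fin m → ι} (hc : c.Injective) (hm : m ≤ d) :
    ∀ᵐ u ∂Measure.pi fun _ : ι => μ, LinearIndependent ℝ (u ∘ c) := by
  induction m with
  | zero => exact ae_of_all _ fun u => linearIndependent_empty_type
  | succ m ih =>
    set a := c (Fin.last m)
    have hca : ∀ j, Fin.init c j ≠ a := fun j h => (Fin.castSucc_lt_last j).ne (hc h)
    have hmeas : ∀ {m} (c : Fin m → ι),
        MeasurableSet {u : ι → Fin d → ℝ | LinearIndependent ℝ (u ∘ c)} := fun c =>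
      (isOpen_setOfPred_linearIndependent.preimage (by fun_prop)).measurableSet
    have hB := (hmeas (Fin.init c)).inter (hmeas c).compl
    have hstep : ∀ᵐ u ∂Measure.pi fun _ : ι => μ,
        LinearIndependent ℝ (u ∘ Fin.init c) → LinearIndependent ℝ (u ∘ c) := by
      refine measure_mono_null (fun u hu => ?_)
        (Measure.pi_eq_zero_of_forall_update_preimage _ hB a fun u => ?_)
      · simpa using hu
      have hupd : ∀ v, Function.update u a v ∘ Fin.init c = u ∘ Fin.init c := fun v => by
        ext1 j
        exact Function.update_of_ne (hca j) v u
      by_cases hu : LinearIndependent ℝ (u ∘ Fin.init c)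
      · have hspan : Submodule.span ℝ (Set.range (u ∘ Fin.init c)) ≠ ⊤ := fun htop => by
          have := finrank_span_eq_card hu
          rw [htop, finrank_top, Module.finrank_fin_fun, Fintype.card_fin] at this
          omega
        refine measure_mono_null (fun v hv => ?_) (measure_submodule_eq_zero hμ hspan)
        by_contra hvW
        refine hv.2 (linearIndependent_finSucc'.mpr ⟨?_, ?_⟩)
        · show LinearIndependent ℝ (Function.update u a v ∘ Fin.init c)
          rwa [hupd]
        · show Function.update u a v a ∉
            Submodule.span ℝ (Set.range (Function.update u a v ∘ Fin.init c))
          rwa [Function.update_self, hupd]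
      · refine measure_mono_null (fun v hv => ?_) measure_empty
        exact hu (by simpa [hupd] using hv.1)
    filter_upwards [ih (hc.comp (Fin.castSucc_injective m)) (by omega), hstep] with u h₁ h₂
      using h₂ h₁

theorem ae_mem_range_of_forall_exists_dotProduct_eq (hd : d < Fintype.card ι) {n : ℕ}
    (z : Fin n → Fin d → ℝ) :
    ∀ᵐ u ∂Measure.pi fun _ : ι => μ,
      ∀ x, (∀ k, ∃ l, u k ⬝ᵥ x = u k ⬝ᵥ z l) → x ∈ Set.range z := by
  obtain ⟨e⟩ : Nonempty (Fin (d + 1) ↪ ι) :=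
    Function.Embedding.nonempty_of_card_le (by simpa using hd)
  set c : Fin d → ι := e ∘ Fin.castSucc
  set a := e (Fin.last d)
  have hca : ∀ j, c j ≠ a := fun j h => (Fin.castSucc_lt_last j).ne (e.injective h)
  have hsolve : ∀ᵐ u ∂Measure.pi fun _ : ι => μ, ∀ (τ : Fin d → Fin n) (l : Fin n),
      dotProductSolve (u ∘ c) (z ∘ τ) - z l ≠ 0 →
        u a ⬝ᵥ (dotProductSolve (u ∘ c) (z ∘ τ) - z l) ≠ 0 := by
    simp only [ae_all_iff]
    intro τ l
    refine ae_dotProduct_ne_zero hμ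
      (((measurable_dotProductSolve _).comp (by fun_prop)).sub_const _) fun u v => ?_
    have hupd : Function.update u a v ∘ c = u ∘ c := by
      ext1 j
      exact Function.update_of_ne (hca j) v u
    rw [hupd]
  have hc : c.Injective := e.injective.comp (Fin.castSucc_injective d)
  filter_upwards [hsolve, ae_linearIndependent_comp_s7 hμ hc le_rfl] with u hs hLI x hx
  choose τ hτ using hx
  have hxs : x = dotProductSolve (u ∘ c) (z ∘ (τ ∘ c)) :=
    eq_dotProductSolve hLI fun j => hτ (c j)
  by_contra hxz
  have hne : x - z (τ a) ≠ 0 := sub_ne_zero.mpr fun h => hxz ⟨τ a, h.symm⟩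
  rw [hxs] at hne
  refine hs (τ ∘ c) (τ a) hne ?_
  rw [← hxs, dotProduct_sub, sub_eq_zero]
  exact hτ a

theorem ae_injOn_dotProduct {n : ℕ} (z : Fin n → Fin d → ℝ) :
    ∀ᵐ u ∂Measure.pi fun _ : ι => μ, ∀ k, (Set.range z).InjOn (u k ⬝ᵥ ·) := by
  have h : ∀ᵐ u ∂Measure.pi fun _ : ι => μ,
      ∀ k l m, z l - z m ≠ 0 → u k ⬝ᵥ (z l - z m) ≠ 0 := by
    refine ae_all_iff.mpr fun k => ae_all_iff.mpr fun l => ae_all_iff.mpr fun m => ?_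
    exact ae_dotProduct_ne_zero hμ measurable_const fun _ _ => rfl
  filter_upwards [h] with u hu k
  rintro _ ⟨l, rfl⟩ _ ⟨m, rfl⟩ hlm
  by_contra hne
  exact hu k l m (sub_ne_zero.mpr hne) (by rwa [dotProduct_sub, sub_eq_zero])

end GenericRows

section EqualPushforwards

variable {α : Type*} [MeasurableSpace α] {γ₁ γ₂ : Measure α}

theorem measure_compl_preimage_image_eq_zero {β : Type*} [MeasurableSpace β] {f : α → β}
    (hf : Measurable f) {S : Set α} (hfS : MeasurableSet (f '' S))
    (hmap : γ₁.map f = γ₂.map f) (h₂ : γ₂ Sᶜ = 0) : γ₁ (f ⁻¹' (f '' S))ᶜ = 0 := by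
  rw [← Set.preimage_compl, ← Measure.map_apply hf hfS.compl, hmap,
    Measure.map_apply hf hfS.compl, Set.preimage_compl]
  exact measure_mono_null (Set.compl_subset_compl.mpr (Set.subset_preimage_image f S)) h₂

theorem MeasureTheory.Measure.eq_of_map_eq_of_injOn {β : Type*} [MeasurableSpace β]
    [MeasurableSingletonClass β] {f : α → β} {S : Set α} (hS : S.Countable) (hf : Measurable f)
    (hinj : S.InjOn f) (h₁ : γ₁ Sᶜ = 0) (h₂ : γ₂ Sᶜ = 0) (hmap : γ₁.map f = γ₂.map f) :
    γ₁ = γ₂ := by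
  ext A -
  have hAS : MeasurableSet (f '' (A ∩ S)) :=
    ((hS.mono Set.inter_subset_right).image f).measurableSet
  have key : ∀ γ : Measure α, γ Sᶜ = 0 → γ A = γ.map f (f '' (A ∩ S)) := fun γ hγ => by
    rw [Measure.map_apply hf hAS, ← measure_inter_conull hγ,
      ← measure_inter_conull (s := f ⁻¹' _) hγ,
      hinj.preimage_image_inter Set.inter_subset_right]
  rw [key γ₁ h₁, key γ₂ h₂, hmap]

theorem MeasureTheory.Measure.eq_of_forall_map_eq {ι : Type*} [Countable ι] {β : ι → Type*}
    [∀ i, MeasurableSpace (β i)] [∀ i, MeasurableSingletonClass (β i)] {f : ∀ i, α → β i}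
    (hf : ∀ i, Measurable (f i)) {S : Set α} (hS : S.Countable)
    (hsep : ∀ x, (∀ i, f i x ∈ f i '' S) → x ∈ S) {i₀ : ι} (hinj : S.InjOn (f i₀))
    (h₂ : γ₂ Sᶜ = 0) (hmap : ∀ i, γ₁.map (f i) = γ₂.map (f i)) : γ₁ = γ₂ := by
  have h₁ : γ₁ Sᶜ = 0 := by
    refine measure_mono_null (fun x hx => ?_) (measure_iUnion_null fun i =>
      measure_compl_preimage_image_eq_zero (hf i) (hS.image (f i)).measurableSet (hmap i) h₂)
    simpa using mt (hsep x) hx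
  exact eq_of_map_eq_of_injOn hS (hf i₀) hinj h₁ h₂ (hmap i₀)

end EqualPushforwards

theorem ae_unique_reconstruction_general
    (d n p : ℕ) (di : Fin p → ℕ) (hD : ∑ i, di i > d)
    (μ : Measure (Fin d → ℝ)) [IsProbabilityMeasure μ]
    (hμ : ∀ H : Submodule ℝ (Fin d → ℝ), Module.finrank ℝ H = d - 1 → μ (H : Set (Fin d → ℝ)) = 0)
    (z : Fin n → (Fin d → ℝ))
    (b : Fin n → ℝ)
    (γZ : Measure (Fin d → ℝ))
    (hγZ : γZ = ∑ l, ENNReal.ofReal (b l) • Measure.dirac (z l)) :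
    (Measure.pi fun i : Fin p => Measure.pi fun _ : Fin (di i) => μ)
      {U : ∀ i : Fin p, Fin (di i) → (Fin d → ℝ) |
        ∀ γ : Measure (Fin d → ℝ), IsProbabilityMeasure γ →
          (∀ i, γ.map (Matrix.of (U i)).mulVec = γZ.map (Matrix.of (U i)).mulVec) →
          γ = γZ} = 1 := by
  have hcard : d < Fintype.card ((i : Fin p) × Fin (di i)) := by simpa using hD
  obtain ⟨k₀⟩ : Nonempty ((i : Fin p) × Fin (di i)) := Fintype.card_pos_iff.mp (by omega)
  have hZ : γZ (Set.range z)ᶜ = 0 := by simp [hγZ]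
  have hgood : ∀ᵐ U ∂Measure.pi fun i : Fin p => Measure.pi fun _ : Fin (di i) => μ,
      ∀ γ : Measure (Fin d → ℝ), IsProbabilityMeasure γ →
        (∀ i, γ.map (Matrix.of (U i)).mulVec = γZ.map (Matrix.of (U i)).mulVec) → γ = γZ := by
    rw [← Measure.pi_map_piCurry fun _ _ => μ,
      (MeasurableEquiv.piCurry _).measurableEmbedding.ae_map_iff]
    filter_upwards [ae_mem_range_of_forall_exists_dotProduct_eq hμ hcard z,
      ae_injOn_dotProduct hμ z] with u hrange hinj γ _ hmap
    refine Measure.eq_of_forall_map_eq (fun i => by fun_prop) (Set.finite_range z).countable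
      (fun x hx => hrange x fun k => ?_) (i₀ := k₀.1) (fun x hx y hy hxy => ?_) hZ hmap
    · obtain ⟨_, ⟨l, rfl⟩, h⟩ := hx k.1
      exact ⟨l, (congrFun h k.2).symm⟩
    · exact hinj k₀ hx hy (congrFun hxy k₀.2)
  exact (measure_congr (Filter.eventuallyEq_univ.mpr hgood)).trans measure_univ

/-- Almost-sure unicity in the reconstruction problem: if the rows of the random matrices
`P_i ∈ ℝ^{d_i × d}` are i.i.d. of a law `ℙ` giving zero mass to hyperplanes and
`Σ_i d_i > d`, then `ℙ`-almost surely the only probability measure `γ` with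
`P_i#γ = P_i#γ_Z` for all `i` is `γ = γ_Z`. -/
theorem ae_unique_reconstruction
    (d n p : ℕ) (di : Fin p → ℕ) (hD : ∑ i, di i > d)
    (μ : Measure (Fin d → ℝ)) [IsProbabilityMeasure μ]
    (hμ : ∀ H : Submodule ℝ (Fin d → ℝ), Module.finrank ℝ H = d - 1 → μ (H : Set (Fin d → ℝ)) = 0)
    (z : Fin n → (Fin d → ℝ)) (hz : Function.Injective z)
    (b : Fin n → ℝ) (hb : ∀ l, 0 < b l) (hsum : ∑ l, b l = 1)
    (γZ : Measure (Fin d → ℝ))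
    (hγZ : γZ = ∑ l, ENNReal.ofReal (b l) • Measure.dirac (z l)) :
    (Measure.pi fun i : Fin p => Measure.pi fun _ : Fin (di i) => μ)
      {U : ∀ i : Fin p, Fin (di i) → (Fin d → ℝ) |
        ∀ γ : Measure (Fin d → ℝ), IsProbabilityMeasure γ →
          (∀ i, γ.map (Matrix.of (U i)).mulVec = γZ.map (Matrix.of (U i)).mulVec) →
          γ = γZ} = 1 :=
  ae_unique_reconstruction_general d n p di hD μ hμ z b γZ hγZ
end

section
/- For n ≥ 3, define z_l = (cos((2l+1)π/n), sin((2l+1)π/n)) for l = 1,…,n, and y_l = (cos(2lπ/n), sin(2lπ/n)). Let P_l = (cos((2l+1)π/(2n)), sin((2l+1)π/(2n))) be 1×2 projection matrices, l = 1,…,n. Then the uniform measures γ_Z = (1/n)Σ_l δ_{z_l} and γ_Y = (1/n)Σ_l δ_{y_l} are distinct but satisfy P_l#γ_Z = P_l#γ_Y for all l ∈ {1,…,n}. -/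
open MeasureTheory Real

private lemma cos_sub_eq_aux (n : ℕ) (hn : (n : ℝ) ≠ 0) (L M K : ℝ) (t : ℤ)
    (hK : K = L - M + t * n) :
    Real.cos (2 * K * π / n - (2 * L + 1) * π / (2 * n)) =
    Real.cos ((2 * M + 1) * π / n - (2 * L + 1) * π / (2 * n)) := by
  have h : 2 * K * π / n - (2 * L + 1) * π / (2 * n) =
      -((2 * M + 1) * π / n - (2 * L + 1) * π / (2 * n)) + t * (2 * π) := by
    subst hK
    field_simp
    ring
  rw [h, Real.cos_add_int_mul_two_pi, Real.cos_neg]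

/-- Counterexample: for `n ≥ 3`, the two interleaved regular `n`-gons inscribed in a
regular `2n`-gon give distinct uniform measures `γ_Z ≠ γ_Y` with identical push-forwards
under the `n` projections `P_l` onto the bisector directions of the `2n`-gon. -/
theorem pathological_counterexample (n : ℕ) (hn : 3 ≤ n)
    (z y : Fin n → (Fin 2 → ℝ))
    (hzdef : ∀ l : Fin n, z l = ![Real.cos ((2 * (l : ℝ) + 1) * π / n),
                                  Real.sin ((2 * (l : ℝ) + 1) * π / n)])
    (hydef : ∀ l : Fin n, y l = ![Real.cos (2 * (l : ℝ) * π / n),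
                                  Real.sin (2 * (l : ℝ) * π / n)])
    (proj : Fin n → ((Fin 2 → ℝ) → ℝ))
    (hproj : ∀ l : Fin n, proj l = fun x =>
      Real.cos ((2 * (l : ℝ) + 1) * π / (2 * n)) * x 0 +
      Real.sin ((2 * (l : ℝ) + 1) * π / (2 * n)) * x 1)
    (γZ γY : Measure (Fin 2 → ℝ))
    (hγZ : γZ = (n : ENNReal)⁻¹ • ∑ l, Measure.dirac (z l))
    (hγY : γY = (n : ENNReal)⁻¹ • ∑ l, Measure.dirac (y l)) :
    γZ ≠ γY ∧ ∀ l : Fin n, γZ.map (proj l) = γY.map (proj l) := by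
  haveI : NeZero n := ⟨by omega⟩
  have hn0 : (n : ℝ) ≠ 0 := by positivity
  constructor
  · -- γZ ≠ γY : evaluate on the singleton {y 0}
    intro h
    have hy0 : y ⟨0, by omega⟩ = ![1, 0] := by
      rw [hydef]
      norm_num
    have hZ : γZ {![1, 0]} = 0 := by
      rw [hγZ]
      simp only [Measure.smul_apply, Measure.coe_finset_sum, Finset.sum_apply, smul_eq_mul]
      have hzero : ∀ m : Fin n, Measure.dirac (z m) {![(1:ℝ), 0]} = 0 := by
        intro m
        rw [Measure.dirac_apply' _ (measurableSet_singleton _)]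
        have hnm : z m ∉ ({![(1:ℝ), 0]} : Set (Fin 2 → ℝ)) := by
          intro hmem
          have hz : z m = ![1, 0] := hmem
          have hcos : Real.cos ((2 * (m : ℝ) + 1) * π / n) = 1 := by
            have := congrFun hz 0
            rwa [hzdef] at this
          obtain ⟨t, ht⟩ := (Real.cos_eq_one_iff _).mp hcos
          have ht2 := congrArg (fun x : ℝ => x * n) ht
          simp only [div_mul_cancel₀ _ hn0] at ht2
          have h1 : 2 * (t : ℝ) * n = 2 * (m : ℝ) + 1 :=
            mul_right_cancel₀ Real.pi_ne_zero (by linear_combination ht2)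
          have h2 : 2 * ((t : ℤ) * (n : ℤ)) = 2 * (m : ℤ) + 1 := by
            have h2r : ((2 * ((t : ℤ) * (n : ℤ)) : ℤ) : ℝ) = ((2 * (m : ℤ) + 1 : ℤ) : ℝ) := by
              push_cast; linarith [h1]
            exact_mod_cast h2r
          omega
        rw [Set.indicator_of_notMem hnm]
      simp [hzero]
    have hY : γY {![(1:ℝ), 0]} ≠ 0 := by
      rw [hγY]
      simp only [Measure.smul_apply, Measure.coe_finset_sum, Finset.sum_apply, smul_eq_mul]
      apply mul_ne_zero
      · simp [ENNReal.inv_ne_zero]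
      · intro hsum
        rw [Finset.sum_eq_zero_iff] at hsum
        have hc := hsum ⟨0, by omega⟩ (Finset.mem_univ _)
        rw [hy0, Measure.dirac_apply' _ (measurableSet_singleton _)] at hc
        simp [Set.indicator_apply] at hc
    rw [h] at hZ
    exact hY hZ
  · -- equal pushforwards
    intro l
    have hmeas : Measurable (proj l) := by
      rw [hproj]
      fun_prop
    have key : ∀ m : Fin n, proj l (y (l - m)) = proj l (z m) := by
      intro m
      have hcast : ∃ t : ℤ, ((l - m : Fin n) : ℝ) = (l : ℝ) - (m : ℝ) + t * n := by
        rcases le_or_gt m l with hml | hml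
        · refine ⟨0, ?_⟩
          have h2 : ((l - m : Fin n) : ℤ) = (l : ℤ) - (m : ℤ) := by
            rw [Fin.coe_int_sub_eq_ite, if_pos hml]
          have h3 := congrArg (fun x : ℤ => (x : ℝ)) h2
          push_cast at h3
          rw [h3]; ring
        · refine ⟨1, ?_⟩
          have h2 : ((l - m : Fin n) : ℤ) = (l : ℤ) - (m : ℤ) + (n : ℤ) := by
            rw [Fin.coe_int_sub_eq_ite, if_neg (not_le.mpr hml)]
          have h3 := congrArg (fun x : ℤ => (x : ℝ)) h2
          push_cast at h3
          rw [h3]; ring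
      obtain ⟨t, ht⟩ := hcast
      rw [hproj, hzdef, hydef]
      simp only [Matrix.cons_val_zero, Matrix.cons_val_one, Matrix.head_cons]
      rw [show ∀ a b : ℝ, Real.cos a * Real.cos b + Real.sin a * Real.sin b
            = Real.cos (b - a) from fun a b => by rw [Real.cos_sub]; ring,
          show ∀ a b : ℝ, Real.cos a * Real.cos b + Real.sin a * Real.sin b
            = Real.cos (b - a) from fun a b => by rw [Real.cos_sub]; ring]
      exact cos_sub_eq_aux n hn0 (l : ℝ) (m : ℝ) _ t ht
    have hmap : ∀ w : Fin n → (Fin 2 → ℝ),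
        (∑ i, Measure.dirac (w i)).map (proj l) = ∑ i, Measure.dirac (proj l (w i)) := by
      intro w
      rw [← Measure.mapₗ_apply_of_measurable hmeas, map_sum]
      simp only [Measure.mapₗ_apply_of_measurable hmeas, Measure.map_dirac' hmeas]
    rw [hγZ, hγY, Measure.map_smul, Measure.map_smul, hmap, hmap]
    congr 1
    rw [← Equiv.sum_comp (Equiv.subLeft l) (fun k => Measure.dirac (proj l (y k)))]
    refine Finset.sum_congr rfl fun m _ => ?_
    rw [Equiv.subLeft_apply, key m]
end

section
/- Let γ_Z = Σ_{l=1}^n b_l δ_{z_l} be a fixed discrete probability measure in ℝ^d with distinct points, and let θ_1,…,θ_p be i.i.d. uniform on the unit sphere S^{d−1}. If p > d, then almost surely, for any probability measure α in P_2(ℝ^d), the equality W_2(P_{θ_i}#α, P_{θ_i}#γ_Z) = 0 for all i implies α = γ_Z; equivalently, γ_Z is the unique minimizer of α ↦ (1/p)Σ_i W_2²(P_{θ_i}#α, P_{θ_i}#γ_Z). -/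
/-!
Only the first `d + 1` directions are needed. Almost surely `θ₁, …, θ_d` form a basis, so a point
`x` is determined by the values `⟪θⱼ, x⟫`; if each of them is one of the finitely many values
`⟪θⱼ, z l⟫`, then by Cramer's rule for the Gram system `x` is one of finitely many candidates,
which depend on `θ₁, …, θ_d` only. Since a hyperplane is null for the uniform measure on the
sphere, the independent direction `θ₀` almost surely separates each candidate from every `z l`,
and the `z l` from one another. Then any `α` whose projections agree with those of `γ_Z` is
concentrated on `{z l}`, and since the projection onto `θ₀` is injective there, `α = γ_Z`.
-/

open MeasureTheory Set Metric Module Matrix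
open scoped ENNReal Pointwise RealInnerProductSpace

namespace MeasureTheory

section MapEq

variable {X Y : Type*} [MeasurableSpace X] [MeasurableSpace Y] [MeasurableSingletonClass Y]
  {α γ : Measure X} {S : Set X}

theorem ae_mem_image_of_map_eq {f : X → Y} (hf : Measurable f) (hS : S.Finite)
    (hγ : ∀ᵐ x ∂γ, x ∈ S) (h : α.map f = γ.map f) : ∀ᵐ x ∂α, f x ∈ f '' S := by
  have hγf : ∀ᵐ y ∂γ.map f, y ∈ f '' S :=
    (ae_map_iff hf.aemeasurable (hS.image f).measurableSet).2 (hγ.mono fun x => mem_image_of_mem f)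
  rw [← h] at hγf
  exact ae_of_ae_map hf.aemeasurable hγf

theorem Measure.ext_of_map_eq_of_injOn {f : X → Y} (hf : Measurable f) (hS : S.Finite)
    (hinj : S.InjOn f) (hα : ∀ᵐ x ∂α, x ∈ S) (hγ : ∀ᵐ x ∂γ, x ∈ S) (h : α.map f = γ.map f) :
    α = γ := by
  ext s -
  have hmap : ∀ μ : Measure X, (∀ᵐ x ∂μ, x ∈ S) → μ s = μ.map f (f '' (s ∩ S)) := by
    intro μ hμ
    rw [Measure.map_apply hf ((hS.subset inter_subset_right).image f).measurableSet]
    refine measure_congr ?_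
    filter_upwards [hμ] with x hx
    refine propext ⟨fun hxs => ⟨x, ⟨hxs, hx⟩, rfl⟩, ?_⟩
    rintro ⟨y, ⟨hys, hyS⟩, hyx⟩
    rwa [← hinj hyS hx hyx]
  rw [hmap α hα, hmap γ hγ, h]

theorem Measure.ext_of_forall_map_eq {ι : Type*} [Countable ι] {f : ι → X → Y}
    (hf : ∀ i, Measurable (f i)) (hS : S.Finite) (hγ : ∀ᵐ x ∂γ, x ∈ S)
    (hcover : {x | ∀ i, f i x ∈ f i '' S} ⊆ S) {i₀ : ι} (hinj : S.InjOn (f i₀))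
    (h : ∀ i, α.map (f i) = γ.map (f i)) : α = γ := by
  have hα : ∀ᵐ x ∂α, x ∈ S :=
    (ae_all_iff.2 fun i => ae_mem_image_of_map_eq (hf i) hS hγ (h i)).mono fun _ hx => hcover hx
  exact Measure.ext_of_map_eq_of_injOn (hf i₀) hS hinj hα hγ (h i₀)

theorem ae_mem_range_sum_smul_dirac [MeasurableSingletonClass X] {ι : Type*} [Fintype ι]
    (z : ι → X) (c : ι → ℝ≥0∞) : ∀ᵐ x ∂(∑ l, c l • Measure.dirac (z l)), x ∈ range z := by
  rw [ae_iff, Measure.coe_finsetSum, Finset.sum_apply]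
  refine Finset.sum_eq_zero fun l _ => ?_
  rw [Measure.smul_apply, Measure.dirac_apply, indicator_of_notMem (by simp), smul_zero]

end MapEq

section Pi

variable {X : Type*} [MeasurableSpace X] {ν : Measure X}

theorem Measure.ae_pi_of_ae_ae_cons [SigmaFinite ν] {k : ℕ} {P : (Fin (k + 1) → X) → Prop}
    (hP : MeasurableSet {θ | P θ})
    (h : ∀ᵐ r ∂Measure.pi (fun _ : Fin k => ν), ∀ᵐ s ∂ν, P (Fin.cons s r)) :
    ∀ᵐ θ ∂Measure.pi (fun _ => ν), P θ := by
  let e := MeasurableEquiv.piFinSuccAbove (fun _ : Fin (k + 1) => X) 0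
  have he : ∀ q, e.symm q = Fin.cons q.1 q.2 := fun q => Fin.insertNth_zero' q.1 q.2
  have hprod : ∀ᵐ q ∂ν.prod (Measure.pi fun _ : Fin k => ν), P (e.symm q) := by
    have hmeas : MeasurableSet {q | P (e.symm q)} := e.symm.measurable hP
    rw [Measure.ae_prod_iff_ae_ae hmeas]
    simp only [he]
    refine (Measure.ae_ae_comm ?_).mpr h
    simpa only [he] using hmeas
  filter_upwards [(measurePreserving_piFinSuccAbove (fun _ => ν) 0).quasiMeasurePreserving.ae hprod]
    with θ hθ
  rwa [e.symm_apply_apply] at hθ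

theorem Measure.measurePreserving_castAdd [IsProbabilityMeasure ν] (m k : ℕ) :
    MeasurePreserving (fun θ : Fin (m + k) → X => fun i => θ (Fin.castAdd k i))
      (Measure.pi fun _ => ν) (Measure.pi fun _ => ν) := by
  refine ⟨by fun_prop, (Measure.pi_eq fun s hs => ?_).symm⟩
  have hpre : (fun θ : Fin (m + k) → X => fun i => θ (Fin.castAdd k i)) ⁻¹' univ.pi s
      = univ.pi (Fin.append s fun _ => univ) := by
    ext θ
    simp [Fin.forall_fin_add]
  rw [Measure.map_apply (by fun_prop) (.univ_pi hs), hpre, Measure.pi_pi, Fin.prod_univ_add]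
  simp

end Pi

section Sphere

variable {E : Type*} [NormedAddCommGroup E] [NormedSpace ℝ E] [FiniteDimensional ℝ E]
  [MeasurableSpace E] [BorelSpace E] {μ : Measure E} [μ.IsAddHaarMeasure]
  {ν : Measure (sphere (0 : E) 1)}

theorem Measure.toSphere_setOf_mem_submodule {W : Submodule ℝ E} (hW : W ≠ ⊤) :
    μ.toSphere {s : sphere (0 : E) 1 | (s : E) ∈ W} = 0 := by
  have hmeas : MeasurableSet {s : sphere (0 : E) 1 | (s : E) ∈ W} :=
    (W.closed_of_finiteDimensional.preimage continuous_subtype_val).measurableSet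
  rw [Measure.toSphere_apply' _ hmeas]
  have hcone : Ioo (0 : ℝ) 1 • (Subtype.val '' {s : sphere (0 : E) 1 | (s : E) ∈ W}) ⊆ W := by
    rintro _ ⟨r, -, _, ⟨s, hs, rfl⟩, rfl⟩
    exact W.smul_mem r hs
  rw [measure_mono_null hcone (Measure.addHaar_submodule μ W hW), mul_zero]

theorem ae_coe_notMem_submodule (hν : ν ≪ μ.toSphere) {W : Submodule ℝ E} (hW : W ≠ ⊤) :
    ∀ᵐ s : sphere (0 : E) 1 ∂ν, (s : E) ∉ W := by
  refine measure_mono_null (fun s hs => ?_) (hν (Measure.toSphere_setOf_mem_submodule hW))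
  simpa using hs

theorem ae_linearIndependent [SigmaFinite ν] (hν : ν ≪ μ.toSphere) {k : ℕ} (hk : k ≤ finrank ℝ E) :
    ∀ᵐ r ∂Measure.pi (fun _ : Fin k => ν), LinearIndependent ℝ fun i => (r i : E) := by
  induction k with
  | zero => exact ae_of_all _ fun r => linearIndependent_empty_type
  | succ k ih =>
    have hmeas : MeasurableSet {θ : Fin (k + 1) → sphere (0 : E) 1 |
        LinearIndependent ℝ fun i => (θ i : E)} :=
      (isOpen_setOfPred_linearIndependent.preimage (by fun_prop)).measurableSet
    refine Measure.ae_pi_of_ae_ae_cons hmeas ?_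
    filter_upwards [ih (by omega)] with r hr
    have hspan : Submodule.span ℝ (range fun i => (r i : E)) ≠ ⊤ := fun h => by
      have := finrank_range_le_card (R := ℝ) fun i => (r i : E)
      rw [Set.finrank, h, finrank_top, Fintype.card_fin] at this
      omega
    filter_upwards [ae_coe_notMem_submodule hν hspan] with s hs
    rw [← Function.comp_def, Fin.comp_cons, linearIndependent_finCons]
    exact ⟨hr, hs⟩

end Sphere

end MeasureTheory

section Gram

variable {E : Type*} [NormedAddCommGroup E] [InnerProductSpace ℝ E] {ι : Type*}

/-- Cramer's rule for the Gram system `⟪r j, x⟫ = c j`, without dividing by `det (gram r)`. -/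
noncomputable def gramCramer {k : ℕ} (r : Fin k → E) (c : Fin k → ℝ) : E :=
  ∑ j, cramer (gram ℝ r) c j • r j

theorem det_gram_smul_eq_gramCramer {k : ℕ} {r : Fin k → E} {c : Fin k → ℝ} {x : E}
    (hx : x ∈ Submodule.span ℝ (range r)) (hc : ∀ j, ⟪r j, x⟫ = c j) :
    (gram ℝ r).det • x = gramCramer r c := by
  set w := (gram ℝ r).det • x - gramCramer r c
  have hw_span : w ∈ Submodule.span ℝ (range r) :=
    sub_mem (Submodule.smul_mem _ _ hx)
      (Submodule.sum_mem _ fun j _ => Submodule.smul_mem _ _ (Submodule.subset_span ⟨j, rfl⟩))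
  have hw_orth : ∀ j, ⟪w, r j⟫ = 0 := fun j => by
    have hcr := congrFun (mulVec_cramer (gram ℝ r) c) j
    simp only [mulVec, dotProduct, gram_apply, Pi.smul_apply, smul_eq_mul] at hcr
    simp only [w, gramCramer, inner_sub_left, real_inner_smul_left, sum_inner]
    rw [real_inner_comm, hc, ← hcr, sub_eq_zero]
    exact Finset.sum_congr rfl fun i _ => by rw [real_inner_comm, mul_comm]
  have hker : Submodule.span ℝ (range r) ≤ LinearMap.ker (innerₛₗ ℝ w) :=
    Submodule.span_le.mpr (by rintro _ ⟨j, rfl⟩; exact hw_orth j)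
  rw [← sub_eq_zero]
  exact inner_self_eq_zero.mp (hker hw_span)

/-- `det (gram r) • (x - z l)`, where `x` solves `⟪r j, x⟫ = ⟪r j, z (τ j)⟫` for all `j`. -/
noncomputable def cramerResidual {k : ℕ} (z : ι → E) (τ : Fin k → ι) (l : ι) (r : Fin k → E) : E :=
  gramCramer r (fun j => ⟪r j, z (τ j)⟫) - (gram ℝ r).det • z l

theorem continuous_cramerResidual {k : ℕ} (z : ι → E) (τ : Fin k → ι) (l : ι) :
    Continuous (cramerResidual z τ l) := by
  have hgram : Continuous fun r : Fin k → E => gram ℝ r :=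
    continuous_matrix fun i j => (continuous_apply i).inner (continuous_apply j)
  have hc : Continuous fun r : Fin k → E => fun j => ⟪r j, z (τ j)⟫ :=
    continuous_pi fun j => (continuous_apply j).inner continuous_const
  have hcramer := hgram.matrix_cramer hc
  unfold cramerResidual gramCramer
  fun_prop

theorem setOf_forall_inner_mem_image_subset_range [FiniteDimensional ℝ E] {d : ℕ}
    (hd : finrank ℝ E = d) {z : ι → E} {θ : Fin (d + 1) → E}
    (hind : LinearIndependent ℝ (Fin.tail θ))
    (hres : ∀ τ l, cramerResidual z τ l (Fin.tail θ) ≠ 0 →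
      ⟪θ 0, cramerResidual z τ l (Fin.tail θ)⟫ ≠ 0) :
    {x | ∀ i, ⟪θ i, x⟫ ∈ (fun y => ⟪θ i, y⟫) '' range z} ⊆ range z := by
  intro x hx
  have hx' : ∀ i, ∃ l, ⟪θ i, z l⟫ = ⟪θ i, x⟫ := fun i => by
    obtain ⟨_, ⟨l, rfl⟩, hl⟩ := hx i
    exact ⟨l, hl⟩
  choose τ hτ using hx'
  have hspan : x ∈ Submodule.span ℝ (range (Fin.tail θ)) := by
    rw [hind.span_eq_top_of_card_eq_finrank' (by simp [hd])]
    exact Submodule.mem_top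
  have hsol : (gram ℝ (Fin.tail θ)).det • x
      = gramCramer (Fin.tail θ) fun j => ⟪Fin.tail θ j, z (τ j.succ)⟫ :=
    det_gram_smul_eq_gramCramer hspan fun j => (hτ j.succ).symm
  have hresidual : cramerResidual z (fun j => τ j.succ) (τ 0) (Fin.tail θ)
      = (gram ℝ (Fin.tail θ)).det • (x - z (τ 0)) := by
    rw [cramerResidual, ← hsol, smul_sub]
  have hdet : (gram ℝ (Fin.tail θ)).det ≠ 0 := det_gram_ne_zero_iff_linearIndependent.mpr hind
  by_contra hxz
  refine hres (fun j => τ j.succ) (τ 0) ?_ ?_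
  · rw [hresidual]
    exact smul_ne_zero hdet (sub_ne_zero.mpr fun h => hxz ⟨τ 0, h.symm⟩)
  · rw [hresidual, real_inner_smul_right, inner_sub_right, hτ 0, sub_self, mul_zero]

end Gram

namespace MeasureTheory

variable {E : Type*} [NormedAddCommGroup E] [InnerProductSpace ℝ E] [FiniteDimensional ℝ E]
  [MeasurableSpace E] [BorelSpace E] {μ : Measure E} [μ.IsAddHaarMeasure]
  {ν : Measure (sphere (0 : E) 1)}

theorem ae_inner_ne_zero (hν : ν ≪ μ.toSphere) {v : E} (hv : v ≠ 0) :
    ∀ᵐ s : sphere (0 : E) 1 ∂ν, ⟪(s : E), v⟫ ≠ 0 := by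
  have hW : (ℝ ∙ v)ᗮ ≠ ⊤ := fun h => by
    have hvv : v ∈ (ℝ ∙ v)ᗮ := h ▸ Submodule.mem_top
    exact hv (inner_self_eq_zero.mp (Submodule.mem_orthogonal_singleton_iff_inner_right.mp hvv))
  filter_upwards [ae_coe_notMem_submodule hν hW] with s hs
  rwa [Submodule.mem_orthogonal_singleton_iff_inner_right, real_inner_comm] at hs

variable [SigmaFinite ν]

theorem ae_inner_cons_ne_zero (hν : ν ≪ μ.toSphere) {k : ℕ} {v : (Fin k → sphere (0 : E) 1) → E}
    (hv : Measurable v) :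
    ∀ᵐ θ ∂Measure.pi (fun _ : Fin (k + 1) => ν),
      v (Fin.tail θ) ≠ 0 → ⟪(θ 0 : E), v (Fin.tail θ)⟫ ≠ 0 := by
  refine Measure.ae_pi_of_ae_ae_cons (by measurability) (ae_of_all _ fun r => ?_)
  simp only [Fin.tail_cons, Fin.cons_zero]
  by_cases hr : v r = 0
  · exact ae_of_all _ fun _ h => absurd hr h
  · filter_upwards [ae_inner_ne_zero hν hr] with s hs using fun _ => hs

theorem ae_inner_injOn_and_setOf_subset_range (hν : ν ≪ μ.toSphere) {d : ℕ}
    (hd : finrank ℝ E = d) {ι : Type*} [Finite ι] (z : ι → E) :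
    ∀ᵐ θ ∂Measure.pi (fun _ : Fin (d + 1) => ν),
      (range z).InjOn (fun x => ⟪(θ 0 : E), x⟫) ∧
      {x | ∀ i, ⟪(θ i : E), x⟫ ∈ (fun y => ⟪(θ i : E), y⟫) '' range z} ⊆ range z := by
  have hind : ∀ᵐ θ ∂Measure.pi (fun _ : Fin (d + 1) => ν),
      LinearIndependent ℝ fun j => (Fin.tail θ j : E) := by
    refine Measure.ae_pi_of_ae_ae_cons
      ((isOpen_setOfPred_linearIndependent.preimage (by fun_prop)).measurableSet) ?_
    filter_upwards [ae_linearIndependent hν hd.ge] with r hr using ae_of_all _ fun s => by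
      simpa only [Fin.tail_cons] using hr
  have hsep : ∀ᵐ θ ∂Measure.pi (fun _ : Fin (d + 1) => ν), ∀ l m,
      z l - z m ≠ 0 → ⟪(θ 0 : E), z l - z m⟫ ≠ 0 :=
    ae_all_iff.2 fun l => ae_all_iff.2 fun m =>
      ae_inner_cons_ne_zero hν (v := fun _ => z l - z m) measurable_const
  have hres : ∀ᵐ θ ∂Measure.pi (fun _ : Fin (d + 1) => ν), ∀ τ l,
      cramerResidual z τ l (fun j => (Fin.tail θ j : E)) ≠ 0 →
        ⟪(θ 0 : E), cramerResidual z τ l (fun j => (Fin.tail θ j : E))⟫ ≠ 0 :=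
    ae_all_iff.2 fun τ => ae_all_iff.2 fun l => ae_inner_cons_ne_zero hν
      (v := fun r => cramerResidual z τ l fun j => (r j : E))
      ((continuous_cramerResidual z τ l).comp (by fun_prop)).measurable
  filter_upwards [hind, hsep, hres] with θ hθind hθsep hθres
  refine ⟨?_, setOf_forall_inner_mem_image_subset_range (θ := fun i => (θ i : E)) hd hθind hθres⟩
  rintro _ ⟨l, rfl⟩ _ ⟨m, rfl⟩ hlm
  by_contra hne
  exact hθsep l m (sub_ne_zero.mpr hne) (by rw [inner_sub_right]; exact sub_eq_zero.mpr hlm)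

end MeasureTheory

theorem ae_sliced_wasserstein_separability_general
    (d n p : ℕ) (hp : p > d)
    (z : Fin n → EuclideanSpace ℝ (Fin d))
    (b : Fin n → ℝ)
    (γZ : Measure (EuclideanSpace ℝ (Fin d)))
    (hγZ : γZ = ∑ l, ENNReal.ofReal (b l) • Measure.dirac (z l))
    (ν : Measure (Metric.sphere (0 : EuclideanSpace ℝ (Fin d)) 1))
    [IsProbabilityMeasure ν]
    (hν : ν = ((volume : Measure (EuclideanSpace ℝ (Fin d))).toSphere Set.univ)⁻¹ •
      (volume : Measure (EuclideanSpace ℝ (Fin d))).toSphere) :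
    (Measure.pi fun _ : Fin p => ν)
      {θ : Fin p → Metric.sphere (0 : EuclideanSpace ℝ (Fin d)) 1 |
        ∀ α : Measure (EuclideanSpace ℝ (Fin d)), IsProbabilityMeasure α →
          (∫⁻ x, ENNReal.ofReal (‖x‖ ^ 2) ∂α) < ⊤ →
          (∀ i, α.map (fun x => @inner ℝ _ _ ((θ i : EuclideanSpace ℝ (Fin d))) x) =
                γZ.map (fun x => @inner ℝ _ _ ((θ i : EuclideanSpace ℝ (Fin d))) x)) →
          α = γZ} = 1 := by
  obtain ⟨k, rfl⟩ := Nat.exists_eq_add_of_le (Nat.succ_le_of_lt hp)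
  have hgood := (Measure.measurePreserving_castAdd (d + 1) k).quasiMeasurePreserving.ae
    (ae_inner_injOn_and_setOf_subset_range (hν ▸ Measure.smul_absolutelyContinuous)
      finrank_euclideanSpace_fin z)
  refine (measure_congr (ae_eq_univ.2 ?_)).trans measure_univ
  filter_upwards [hgood] with θ ⟨hinj, hcover⟩ α _ _ hproj
  subst hγZ
  exact Measure.ext_of_forall_map_eq (fun _ => (continuous_const.inner continuous_id).measurable)
    (finite_range z) (ae_mem_range_sum_smul_dirac z _) hcover hinj fun i => hproj (Fin.castAdd k i)

/-- Separability of the empirical Sliced Wasserstein distance: with `p > d` directions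
`θ_1,…,θ_p` drawn i.i.d. from the uniform probability measure on the unit sphere
`S^{d-1}`, almost surely the only probability measure `α` with finite second moment whose
projections `P_{θ_i}#α` all coincide with those of `γ_Z` (i.e. with
`W_2(P_{θ_i}#α, P_{θ_i}#γ_Z) = 0` for all `i`) is `α = γ_Z`; equivalently `γ_Z` is the
unique minimizer of `α ↦ (1/p) Σ_i W_2²(P_{θ_i}#α, P_{θ_i}#γ_Z)`. -/
theorem ae_sliced_wasserstein_separability
    (d n p : ℕ) (hp : p > d)
    (z : Fin n → EuclideanSpace ℝ (Fin d)) (hz : Function.Injective z)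
    (b : Fin n → ℝ) (hb : ∀ l, 0 < b l) (hbsum : ∑ l, b l = 1)
    (γZ : Measure (EuclideanSpace ℝ (Fin d)))
    (hγZ : γZ = ∑ l, ENNReal.ofReal (b l) • Measure.dirac (z l))
    (ν : Measure (Metric.sphere (0 : EuclideanSpace ℝ (Fin d)) 1))
    [IsProbabilityMeasure ν]
    (hν : ν = ((volume : Measure (EuclideanSpace ℝ (Fin d))).toSphere Set.univ)⁻¹ •
      (volume : Measure (EuclideanSpace ℝ (Fin d))).toSphere) :
    (Measure.pi fun _ : Fin p => ν)
      {θ : Fin p → Metric.sphere (0 : EuclideanSpace ℝ (Fin d)) 1 |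
        ∀ α : Measure (EuclideanSpace ℝ (Fin d)), IsProbabilityMeasure α →
          (∫⁻ x, ENNReal.ofReal (‖x‖ ^ 2) ∂α) < ⊤ →
          (∀ i, α.map (fun x => @inner ℝ _ _ ((θ i : EuclideanSpace ℝ (Fin d))) x) =
                γZ.map (fun x => @inner ℝ _ _ ((θ i : EuclideanSpace ℝ (Fin d))) x)) →
          α = γZ} = 1 :=
  ae_sliced_wasserstein_separability_general d n p hp z b γZ hγZ ν hν
end
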